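/- Let d ≥ 2, β > 0, κ > 0 and C_G > 0, and let G : ℝ^d → [0,∞) be a probability density that is radially symmetric (G(v) depends only on |v|), satisfies G(v) ≤ C_G (1+|v|)^{−d−β} for all v, and |v|^{d+β} G(v) → κ as |v| → ∞. Define G₁(x) = 2 ∫₀^∞ t^{−d} e^{−t} G(x/t) dt for x ∈ ℍ = { v ∈ ℝ^d : v·e₁ > 0 }. Then (i) |x|^{d+β} G₁(x) → 2 Γ(β+1) κ as |x| → ∞ (x ∈ ℍ), and (ii) there exists a constant C > 0 such that G₁(x) ≤ C · min( |x|^{1−d}, |x|^{−β−d} ) for all x ∈ ℍ. -/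

import Mathlib

open Metric Set MeasureTheory Filter
open scoped RealInnerProductSpace Topology

noncomputable section

/-- The first vector of the canonical basis of `ℝ^d`. -/
def e1 (d : ℕ) : EuclideanSpace ℝ (Fin d) :=
  if h : 0 < d then EuclideanSpace.single (⟨0, h⟩ : Fin d) 1 else 0

/-- `G₁(x) = 2∫₀^∞ t^{−d} e^{−t} G(x/t) dt`, the density of `E·W` with `E ∼ Exp(1)` and
`W ∼ 2G(v)1_{v·e₁>0}`, for `x` in the half-space `ℍ`. -/
def Gone (d : ℕ) (G : EuclideanSpace ℝ (Fin d) → ℝ) (x : EuclideanSpace ℝ (Fin d)) : ℝ :=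
  2 * ∫ t in Set.Ioi (0 : ℝ), t ^ (-(d : ℝ)) * Real.exp (-t) * G (t⁻¹ • x)

/-!
Radial symmetry gives `G v = g ‖v‖` with `g s = G (s • e₁)`, hence `G₁(x) = 2 P(‖x‖)` for
`P(r) = ∫₀^∞ t^{-d} e^{-t} g(r/t) dt` (`profileIntegral d g r`).
Since `r^{d+β} t^{-d} = t^β (r/t)^{d+β}`, we get
`r^{d+β} P(r) = ∫₀^∞ e^{-t} t^β · (r/t)^{d+β} g(r/t) dt`, where the second factor is bounded by
`C_G` and tends to `κ` as `r → ∞`: dominated convergence gives the limit `Γ(β+1) κ`.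
For the bound, `(1+s)^{-d-β} ≤ s^{-d-β}` gives `P(r) ≤ C_G Γ(β+1) r^{-β-d}`, while `e^{-t} ≤ 1`
and the substitution `t = r s` give `P(r) ≤ C_G r^{1-d} ∫₀^∞ s^β (1+s)^{-d-β} ds`, finite as
`d > 1`. Measurability of `g` comes from the integrability of `G` through polar coordinates.
-/

open Real

theorem div_rpow_mul_rpow {r t : ℝ} (hr : 0 ≤ r) (ht : 0 < t) (p q : ℝ) :
    (r / t) ^ p * t ^ q = r ^ p * t ^ (q - p) := by
  rw [div_rpow hr ht.le, rpow_sub ht]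
  ring

theorem rpow_mul_one_add_rpow_neg_le_one {s p : ℝ} (hs : 0 ≤ s) (hp : 0 ≤ p) :
    s ^ p * (1 + s) ^ (-p) ≤ 1 := by
  rw [rpow_neg (by positivity), ← div_eq_mul_inv, div_le_one (by positivity)]
  exact rpow_le_rpow hs (by linarith) hp

theorem integrableOn_exp_neg_mul_rpow {β : ℝ} (hβ : -1 < β) :
    IntegrableOn (fun t => exp (-t) * t ^ β) (Ioi 0) := by
  simpa using GammaIntegral_convergent (s := β + 1) (by linarith)

theorem integral_exp_neg_mul_rpow_eq_Gamma {β : ℝ} (hβ : -1 < β) :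
    ∫ t in Ioi (0 : ℝ), exp (-t) * t ^ β = Gamma (β + 1) := by
  simp [Gamma_eq_integral (s := β + 1) (by linarith)]

theorem integrableOn_rpow_mul_one_add_rpow {d β : ℝ} (hβ : -1 < β) (hd : 1 < d) :
    IntegrableOn (fun s : ℝ => s ^ β * (1 + s) ^ (-d - β)) (Ioi 0) := by
  have hcont : ContinuousOn (fun s : ℝ => s ^ β * (1 + s) ^ (-d - β)) (Ioi 0) := by
    intro s hs
    have hs0 : (0 : ℝ) < s := hs
    have h_base : s ≠ 0 ∨ 0 ≤ β := Or.inl hs0.ne'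
    have h_shift : 1 + s ≠ 0 ∨ 0 ≤ -d - β := Or.inl (by positivity)
    apply ContinuousAt.continuousWithinAt
    fun_prop (disch := assumption)
  rw [← Ioc_union_Ioi_eq_Ioi zero_le_one]
  refine IntegrableOn.union ?_ ?_
  · have hint : IntegrableOn (fun s : ℝ => s ^ β) (Ioc 0 1) := by
      rw [← intervalIntegrable_iff_integrableOn_Ioc_of_le zero_le_one]
      exact intervalIntegral.intervalIntegrable_rpow' hβ
    refine hint.mono' ((hcont.mono Ioc_subset_Ioi_self).aestronglyMeasurable measurableSet_Ioc) ?_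
    filter_upwards [ae_restrict_mem measurableSet_Ioc] with s hs
    have hs0 : 0 < s := hs.1
    rw [norm_of_nonneg (by positivity)]
    exact mul_le_of_le_one_right (by positivity)
      (rpow_le_one_of_one_le_of_nonpos (by linarith) (by linarith))
  · have hint : IntegrableOn (fun s : ℝ => s ^ (-d)) (Ioi 1) :=
      integrableOn_Ioi_rpow_of_lt (by linarith) one_pos
    refine hint.mono' ((hcont.mono (Ioi_subset_Ioi zero_le_one)).aestronglyMeasurable
      measurableSet_Ioi) ?_
    filter_upwards [ae_restrict_mem measurableSet_Ioi] with s (hs : 1 < s)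
    have hs0 : 0 < s := by linarith
    rw [norm_of_nonneg (by positivity)]
    calc s ^ β * (1 + s) ^ (-d - β) ≤ s ^ β * s ^ (-d - β) :=
          mul_le_mul_of_nonneg_left
            (rpow_le_rpow_of_nonpos hs0 (by linarith) (by linarith)) (by positivity)
      _ = s ^ (-d) := by rw [← rpow_add hs0]; ring_nf

def profileIntegral (d : ℝ) (g : ℝ → ℝ) (r : ℝ) : ℝ :=
  ∫ t in Ioi (0 : ℝ), t ^ (-d) * exp (-t) * g (r / t)

section profileIntegral

variable {g : ℝ → ℝ} {d β C r : ℝ}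

theorem profileIntegrand_nonneg (hg0 : ∀ s, 0 ≤ g s) :
    0 ≤ᵐ[volume.restrict (Ioi 0)] fun t => t ^ (-d) * exp (-t) * g (r / t) := by
  filter_upwards [ae_restrict_mem measurableSet_Ioi] with t (ht : 0 < t)
  have := hg0 (r / t)
  positivity

theorem profileIntegral_le_Gamma (hβ : -1 < β) (hdβ : 0 ≤ d + β) (hC : 0 ≤ C)
    (hg0 : ∀ s, 0 ≤ g s) (hgbd : ∀ s, 0 < s → g s ≤ C * (1 + s) ^ (-d - β)) (hr : 0 < r) :
    profileIntegral d g r ≤ C * Gamma (β + 1) * r ^ (-β - d) := by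
  rw [← integral_exp_neg_mul_rpow_eq_Gamma hβ, mul_right_comm, ← integral_const_mul]
  refine integral_mono_of_nonneg (profileIntegrand_nonneg hg0)
    ((integrableOn_exp_neg_mul_rpow hβ).const_mul _) ?_
  filter_upwards [ae_restrict_mem measurableSet_Ioi] with t (ht : 0 < t)
  have hrt : 0 < r / t := div_pos hr ht
  calc t ^ (-d) * exp (-t) * g (r / t) ≤ t ^ (-d) * exp (-t) * (C * (r / t) ^ (-d - β)) := by
        gcongr
        exact (hgbd _ hrt).trans (mul_le_mul_of_nonneg_left
          (rpow_le_rpow_of_nonpos hrt (by linarith) (by linarith)) hC)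
    _ = C * r ^ (-β - d) * (exp (-t) * t ^ β) := by
        have := div_rpow_mul_rpow hr.le ht (-d - β) (-d)
        rw [show -d - (-d - β) = β by ring] at this
        rw [show -β - d = -d - β by ring]
        linear_combination C * exp (-t) * this

theorem profileIntegral_le_rpow_one_sub (hβ : -1 < β) (hd : 1 < d)
    (hg0 : ∀ s, 0 ≤ g s) (hgbd : ∀ s, 0 < s → g s ≤ C * (1 + s) ^ (-d - β)) (hr : 0 < r) :
    profileIntegral d g r ≤
      C * (∫ s in Ioi (0 : ℝ), s ^ β * (1 + s) ^ (-d - β)) * r ^ (1 - d) := by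
  set h : ℝ → ℝ := fun s => s ^ β * (1 + s) ^ (-d - β)
  have h_scale : ∫ s in Ioi (0 : ℝ), h s = r⁻¹ * ∫ t in Ioi (0 : ℝ), h (r⁻¹ * t) := by
    rw [integral_comp_mul_left_Ioi h 0 (inv_pos.2 hr), mul_zero, inv_inv, smul_eq_mul,
      inv_mul_cancel_left₀ hr.ne']
  have h_int : IntegrableOn (fun t => h (r⁻¹ * t)) (Ioi 0) := by
    rw [integrableOn_Ioi_comp_mul_left_iff h 0 (inv_pos.2 hr), mul_zero]
    exact integrableOn_rpow_mul_one_add_rpow hβ hd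
  have h_pow : r ^ (1 - d) = r * r ^ (-d) := by
    rw [sub_eq_add_neg, rpow_add hr, rpow_one]
  rw [h_scale, h_pow, show ∀ a b : ℝ, C * (r⁻¹ * a) * (r * b) = C * b * a by
    intro a b; field_simp, ← integral_const_mul]
  refine integral_mono_of_nonneg (profileIntegrand_nonneg hg0) (h_int.const_mul _) ?_
  filter_upwards [ae_restrict_mem measurableSet_Ioi] with t (ht : 0 < t)
  have hrt : 0 < r / t := div_pos hr ht
  have h_split : 1 + r / t = r / t * (1 + t / r) := by field_simp; ring
  have e1 := div_rpow_mul_rpow hr.le ht (-d - β) (-d)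
  have e2 := div_rpow_mul_rpow ht.le hr β (-d)
  rw [show -d - (-d - β) = β by ring] at e1
  calc t ^ (-d) * exp (-t) * g (r / t) ≤ t ^ (-d) * 1 * (C * (1 + r / t) ^ (-d - β)) := by
        have := hg0 (r / t)
        gcongr
        · exact exp_le_one_iff.2 (by linarith)
        · exact hgbd _ hrt
    _ = C * r ^ (-d) * h (r⁻¹ * t) := by
        simp only [h, h_split, inv_mul_eq_div, mul_rpow hrt.le (by positivity : 0 ≤ 1 + t / r)]
        linear_combination C * (1 + t / r) ^ (-d - β) * (e1 - e2)

theorem exists_profileIntegral_le_mul_min (hβ : -1 < β) (hd : 1 < d) (hC : 0 < C)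
    (hg0 : ∀ s, 0 ≤ g s) (hgbd : ∀ s, 0 < s → g s ≤ C * (1 + s) ^ (-d - β)) :
    ∃ K > 0, ∀ r > 0, profileIntegral d g r ≤ K * min (r ^ (1 - d)) (r ^ (-β - d)) := by
  set B := ∫ s in Ioi (0 : ℝ), s ^ β * (1 + s) ^ (-d - β)
  have hΓ : 0 < Gamma (β + 1) := Gamma_pos_of_pos (by linarith)
  refine ⟨C * max (Gamma (β + 1)) B, by positivity, fun r hr => ?_⟩
  rw [mul_min_of_nonneg _ _ (by positivity)]
  refine le_min ?_ ?_
  · calc profileIntegral d g r ≤ C * B * r ^ (1 - d) :=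
          profileIntegral_le_rpow_one_sub hβ hd hg0 hgbd hr
      _ ≤ C * max (Gamma (β + 1)) B * r ^ (1 - d) := by gcongr; exact le_max_right _ _
  · calc profileIntegral d g r ≤ C * Gamma (β + 1) * r ^ (-β - d) :=
          profileIntegral_le_Gamma hβ (by linarith) hC.le hg0 hgbd hr
      _ ≤ C * max (Gamma (β + 1)) B * r ^ (-β - d) := by gcongr; exact le_max_left _ _

theorem rpow_mul_profileIntegrand {r t : ℝ} (hr : 0 ≤ r) (ht : 0 < t) (d β y : ℝ) :
    r ^ (d + β) * (t ^ (-d) * exp (-t) * y) = exp (-t) * t ^ β * ((r / t) ^ (d + β) * y) := by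
  have := div_rpow_mul_rpow hr ht (d + β) β
  rw [show β - (d + β) = -d by ring] at this
  linear_combination -exp (-t) * y * this

theorem tendsto_rpow_mul_profileIntegral {κ : ℝ} (hβ : -1 < β) (hdβ : 0 ≤ d + β) (hC : 0 ≤ C)
    (hg : ∀ r, 0 < r → AEStronglyMeasurable (fun t => g (r / t)) (volume.restrict (Ioi 0)))
    (hg0 : ∀ s, 0 ≤ g s) (hgbd : ∀ s, 0 < s → g s ≤ C * (1 + s) ^ (-d - β))
    (hgκ : Tendsto (fun s => s ^ (d + β) * g s) atTop (𝓝 κ)) :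
    Tendsto (fun r => r ^ (d + β) * profileIntegral d g r) atTop (𝓝 (Gamma (β + 1) * κ)) := by
  rw [← integral_exp_neg_mul_rpow_eq_Gamma hβ, ← integral_mul_const]
  simp only [profileIntegral, ← integral_const_mul]
  refine tendsto_integral_filter_of_dominated_convergence (fun t => C * (exp (-t) * t ^ β))
    ?_ ?_ ((integrableOn_exp_neg_mul_rpow hβ).const_mul C) ?_
  · filter_upwards [eventually_gt_atTop 0] with r hr
    have h_cont : ContinuousOn (fun t : ℝ => t ^ (-d) * exp (-t)) (Ioi 0) := by
      intro t ht
      have ht0 : t ≠ 0 ∨ 0 ≤ -d := Or.inl (ne_of_gt ht)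
      apply ContinuousAt.continuousWithinAt
      fun_prop (disch := assumption)
    exact ((h_cont.aestronglyMeasurable measurableSet_Ioi).mul (hg r hr)).const_mul _
  · filter_upwards [eventually_gt_atTop 0] with r hr
    filter_upwards [ae_restrict_mem measurableSet_Ioi] with t (ht : 0 < t)
    have hrt : 0 < r / t := div_pos hr ht
    have h_tail : (r / t) ^ (d + β) * g (r / t) ≤ C := by
      calc (r / t) ^ (d + β) * g (r / t)
          ≤ (r / t) ^ (d + β) * (C * (1 + r / t) ^ (-(d + β))) := by
            rw [neg_add']
            exact mul_le_mul_of_nonneg_left (hgbd _ hrt) (by positivity)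
        _ = C * ((r / t) ^ (d + β) * (1 + r / t) ^ (-(d + β))) := by ring
        _ ≤ C := mul_le_of_le_one_right hC (rpow_mul_one_add_rpow_neg_le_one hrt.le hdβ)
    have := hg0 (r / t)
    rw [rpow_mul_profileIntegrand hr.le ht, norm_of_nonneg (by positivity), mul_comm C]
    exact mul_le_mul_of_nonneg_left h_tail (by positivity)
  · filter_upwards [ae_restrict_mem measurableSet_Ioi] with t (ht : 0 < t)
    refine (((hgκ.comp (tendsto_id.atTop_div_const ht)).const_mul (exp (-t) * t ^ β))).congr' ?_
    filter_upwards [eventually_gt_atTop 0] with r hr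
    exact (rpow_mul_profileIntegrand hr.le ht d β _).symm

end profileIntegral

theorem aestronglyMeasurable_comp_div_of_integrable_fun_norm {E : Type*} [NormedAddCommGroup E]
    [NormedSpace ℝ E] [FiniteDimensional ℝ E] [MeasurableSpace E] [BorelSpace E] [Nontrivial E]
    (μ : Measure E) [μ.IsAddHaarMeasure] {g : ℝ → ℝ} (hg : Integrable (fun v => g ‖v‖) μ)
    {r : ℝ} (hr : 0 < r) :
    AEStronglyMeasurable (fun t => g (r / t)) (volume.restrict (Ioi 0)) := by
  set n := Module.finrank ℝ E - 1
  have h_radial : IntegrableOn (fun y => y ^ n • g y) (Ioi 0) :=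
    (integrable_fun_norm_addHaar μ).1 hg
  have h_scaled : IntegrableOn (fun y => (r * y) ^ n • g (r * y)) (Ioi 0) := by
    rwa [integrableOn_Ioi_comp_mul_left_iff (fun y => y ^ n • g y) 0 hr, mul_zero]
  have h_inv := (integrableOn_Ioi_comp_rpow_iff _ (p := -1) (by norm_num)).2 h_scaled
  have h_cont : ContinuousOn (fun t : ℝ => t ^ 2 * (t / r) ^ n) (Ioi 0) := by fun_prop
  refine (h_inv.aestronglyMeasurable.mul (h_cont.aestronglyMeasurable measurableSet_Ioi)).congr ?_
  filter_upwards [ae_restrict_mem measurableSet_Ioi] with t (ht : 0 < t)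
  have : t ^ (-1 - 1 : ℝ) = (t ^ 2)⁻¹ := by
    rw [show (-1 - 1 : ℝ) = -(2 : ℕ) by norm_num, rpow_neg ht.le, rpow_natCast]
  simp only [Pi.mul_apply, smul_eq_mul, rpow_neg_one, this, abs_neg, abs_one, one_mul,
    ← div_eq_mul_inv, div_pow]
  field_simp

theorem norm_e1 {d : ℕ} (hd : 0 < d) : ‖e1 d‖ = 1 := by
  simp [e1, hd]

theorem Gone_eq_two_mul_profileIntegral {d : ℕ} {G : EuclideanSpace ℝ (Fin d) → ℝ} {g : ℝ → ℝ}
    (hG : ∀ v, G v = g ‖v‖) (x : EuclideanSpace ℝ (Fin d)) :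
    Gone d G x = 2 * profileIntegral d g ‖x‖ := by
  rw [Gone, profileIntegral]
  congr 1
  refine setIntegral_congr_fun measurableSet_Ioi fun t ht => ?_
  rw [hG, norm_smul, norm_inv, norm_of_nonneg (le_of_lt ht), inv_mul_eq_div]

theorem tendsto_comp_smul_atTop_of_cocompact {E α : Type*} [NormedAddCommGroup E]
    [NormedSpace ℝ E] [ProperSpace E] {f : E → α} {l : Filter α} (hf : Tendsto f (cocompact E) l)
    {u : E} (hu : u ≠ 0) : Tendsto (fun s : ℝ => f (s • u)) atTop l := by
  refine hf.comp ?_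
  rw [← cobounded_eq_cocompact, ← tendsto_norm_atTop_iff_cobounded]
  simp only [norm_smul, Real.norm_eq_abs]
  exact tendsto_abs_atTop_atTop.atTop_mul_const (norm_pos_iff.2 hu)

theorem stmt_18_general (d : ℕ) (hd : 2 ≤ d) (β κ C_G : ℝ)
    (hβ : 0 < β) (hCG : 0 < C_G)
    (G : EuclideanSpace ℝ (Fin d) → ℝ)
    (hGnn : ∀ v, 0 ≤ G v)
    (hGprob : ∫ v, G v = 1)
    (hGrad : ∀ u v : EuclideanSpace ℝ (Fin d), ‖u‖ = ‖v‖ → G u = G v)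
    (hGbd : ∀ v : EuclideanSpace ℝ (Fin d), G v ≤ C_G * (1 + ‖v‖) ^ (-(d : ℝ) - β))
    (hGasym : Tendsto (fun v : EuclideanSpace ℝ (Fin d) => ‖v‖ ^ ((d : ℝ) + β) * G v)
      (cocompact (EuclideanSpace ℝ (Fin d))) (𝓝 κ)) :
    (∀ ε : ℝ, 0 < ε → ∃ R : ℝ, ∀ x : EuclideanSpace ℝ (Fin d),
      0 < ⟪x, e1 d⟫ → R ≤ ‖x‖ →
        |‖x‖ ^ ((d : ℝ) + β) * Gone d G x - 2 * Real.Gamma (β + 1) * κ| ≤ ε) ∧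
    ∃ C : ℝ, 0 < C ∧ ∀ x : EuclideanSpace ℝ (Fin d), 0 < ⟪x, e1 d⟫ →
      Gone d G x ≤ C * min (‖x‖ ^ (1 - (d : ℝ))) (‖x‖ ^ (-β - (d : ℝ))) := by
  have hd1 : (1 : ℝ) < d := by exact_mod_cast hd
  have : Nonempty (Fin d) := ⟨⟨0, by omega⟩⟩
  have hu : ‖e1 d‖ = 1 := norm_e1 (by omega)
  set g : ℝ → ℝ := fun s => G (s • e1 d)
  have h_norm : ∀ s : ℝ, 0 ≤ s → ‖s • e1 d‖ = s := fun s hs => by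
    rw [norm_smul, hu, mul_one, norm_of_nonneg hs]
  have hGg : ∀ v, G v = g ‖v‖ := fun v => hGrad _ _ (h_norm _ (norm_nonneg v)).symm
  have hgbd : ∀ s, 0 < s → g s ≤ C_G * (1 + s) ^ (-(d : ℝ) - β) := fun s hs => by
    simpa only [h_norm s hs.le] using hGbd (s • e1 d)
  have hg_meas : ∀ r, 0 < r →
      AEStronglyMeasurable (fun t => g (r / t)) (volume.restrict (Ioi 0)) := fun r hr =>
    aestronglyMeasurable_comp_div_of_integrable_fun_norm
      (volume : Measure (EuclideanSpace ℝ (Fin d)))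
      (by simpa only [← hGg] using Integrable.of_integral_ne_zero (by simp [hGprob])) hr
  have hgκ : Tendsto (fun s => s ^ ((d : ℝ) + β) * g s) atTop (𝓝 κ) := by
    have hu0 : e1 d ≠ 0 := norm_ne_zero_iff.1 (by rw [hu]; exact one_ne_zero)
    refine (tendsto_comp_smul_atTop_of_cocompact hGasym hu0).congr' ?_
    filter_upwards [eventually_ge_atTop 0] with s hs
    rw [h_norm s hs]
  refine ⟨fun ε hε => ?_, ?_⟩
  · have h_lim := (tendsto_rpow_mul_profileIntegral (by linarith) (by linarith) hCG.le hg_meas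
      (fun s => hGnn _) hgbd hgκ).const_mul 2
    obtain ⟨R, hR⟩ := Metric.tendsto_atTop.1 h_lim ε hε
    refine ⟨R, fun x _ hxR => ?_⟩
    rw [Gone_eq_two_mul_profileIntegral hGg, ← Real.dist_eq, mul_left_comm, mul_assoc 2]
    exact (hR ‖x‖ hxR).le
  · obtain ⟨K, hK, h_bound⟩ := exists_profileIntegral_le_mul_min (by linarith) hd1 hCG
      (fun s => hGnn _) hgbd
    refine ⟨2 * K, by positivity, fun x hx => ?_⟩
    have hx0 : x ≠ 0 := by rintro rfl; simp at hx
    rw [Gone_eq_two_mul_profileIntegral hGg, mul_assoc]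
    exact mul_le_mul_of_nonneg_left (h_bound _ (norm_pos_iff.2 hx0)) zero_le_two

/-- if `G` is a radially symmetric probability density with
`G(v) ≤ C_G (1+|v|)^{−d−β}` and `|v|^{d+β} G(v) → κ`, then
(i) `|x|^{d+β} G₁(x) → 2Γ(β+1)κ` as `|x| → ∞` in `ℍ`, and
(ii) there is `C > 0` with `G₁(x) ≤ C min(|x|^{1−d}, |x|^{−β−d})` on `ℍ`. -/
theorem stmt_18 (d : ℕ) (hd : 2 ≤ d) (β κ C_G : ℝ)
    (hβ : 0 < β) (hκ : 0 < κ) (hCG : 0 < C_G)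
    (G : EuclideanSpace ℝ (Fin d) → ℝ)
    (hGnn : ∀ v, 0 ≤ G v)
    (hGprob : ∫ v, G v = 1)
    (hGrad : ∀ u v : EuclideanSpace ℝ (Fin d), ‖u‖ = ‖v‖ → G u = G v)
    (hGbd : ∀ v : EuclideanSpace ℝ (Fin d), G v ≤ C_G * (1 + ‖v‖) ^ (-(d : ℝ) - β))
    (hGasym : Tendsto (fun v : EuclideanSpace ℝ (Fin d) => ‖v‖ ^ ((d : ℝ) + β) * G v)
      (cocompact (EuclideanSpace ℝ (Fin d))) (𝓝 κ)) :
    (∀ ε : ℝ, 0 < ε → ∃ R : ℝ, ∀ x : EuclideanSpace ℝ (Fin d),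
      0 < ⟪x, e1 d⟫ → R ≤ ‖x‖ →
        |‖x‖ ^ ((d : ℝ) + β) * Gone d G x - 2 * Real.Gamma (β + 1) * κ| ≤ ε) ∧
    ∃ C : ℝ, 0 < C ∧ ∀ x : EuclideanSpace ℝ (Fin d), 0 < ⟪x, e1 d⟫ →
      Gone d G x ≤ C * min (‖x‖ ^ (1 - (d : ℝ))) (‖x‖ ^ (-β - (d : ℝ))) :=
  stmt_18_general d hd β κ C_G hβ hCG G hGnn hGprob hGrad hGbd hGasym
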